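/- Let P_t(x,y) = P_t(x−y) with P_t(x) = (1/(2πt)) exp(−|x|²/(2t)). For all T₀, T₁ ∈ (0,∞), p ∈ ℝ_{≥0}, and y, y' ∈ ℝ²: ∫_{ℝ²} P_{T₀}(y,x') P_{T₁}(x',y') / (1 + |x'|^p) dx' ≤ C(p) (1 + T₁^{p/2}) / (1 + |y'|^p) · P_{T₀ + 2T₁}(y − y'). -/

import Mathlib

/-!
Peetre's inequality `1 + |y'|^p ≤ 2^p (1 + |x'|^p) (1 + |x' - y'|^p)` trades the weight at `x'`
for a weight at `x' - y'`, which the Gaussian `P_{T₁}(x' - y')` absorbs at the price of doubling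
its variance: `P_t(z) (1 + |z|^p) ≤ C(p) (1 + t^{p/2}) P_{2t}(z)`, because
`|z|^p e^{-|z|²/(4t)} ≤ (2pt)^{p/2}`. What is left is the Chapman–Kolmogorov identity
`∫ P_{T₀}(y - x') P_{2T₁}(x' - y') dx' = P_{T₀+2T₁}(y - y')`, which follows by completing the
square in `x'`.
-/

open MeasureTheory

/-- The two-dimensional heat kernel `P_t(x) = (2πt)⁻¹ exp(−‖x‖²/(2t))`. -/
noncomputable def heatK (t : ℝ) (x : EuclideanSpace ℝ (Fin 2)) : ℝ :=
  (2 * Real.pi * t)⁻¹ * Real.exp (-‖x‖ ^ 2 / (2 * t))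

open Real

local notation "ℝ²" => EuclideanSpace ℝ (Fin 2)

section InnerProductSpace

variable {V : Type*} [NormedAddCommGroup V] [InnerProductSpace ℝ V]

lemma norm_smul_add_smul_sq_add_mul_norm_sub_sq (s t : ℝ) (u w : V) :
    ‖t • u + s • w‖ ^ 2 + s * t * ‖w - u‖ ^ 2 =
      t * (s + t) * ‖u‖ ^ 2 + s * (s + t) * ‖w‖ ^ 2 := by
  rw [norm_add_sq_real, norm_sub_sq_real, norm_smul, norm_smul, real_inner_smul_left,
    real_inner_smul_right, real_inner_comm u w, Real.norm_eq_abs, Real.norm_eq_abs,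
    mul_pow, mul_pow, sq_abs, sq_abs]
  ring

lemma norm_sub_sq_div_add_norm_sub_sq_div {s t : ℝ} (hs : 0 < s) (ht : 0 < t) (a b x : V) :
    ‖x - a‖ ^ 2 / s + ‖x - b‖ ^ 2 / t =
      ‖a - b‖ ^ 2 / (s + t) + ‖x - (s + t)⁻¹ • (t • a + s • b)‖ ^ 2 / (s * t / (s + t)) := by
  have hx : x - (s + t)⁻¹ • (t • a + s • b) = (s + t)⁻¹ • (t • (x - a) + s • (x - b)) := by
    match_scalars <;> field_simp
    ring
  have key := norm_smul_add_smul_sq_add_mul_norm_sub_sq s t (x - a) (x - b)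
  rw [show x - b - (x - a) = a - b by abel] at key
  rw [hx, norm_smul, mul_pow, norm_inv, Real.norm_eq_abs, abs_of_pos (by positivity)]
  field_simp
  linear_combination -key

end InnerProductSpace

lemma heatK_nonneg {t : ℝ} (ht : 0 ≤ t) (x : ℝ²) : 0 ≤ heatK t x := by
  unfold heatK
  positivity

lemma heatK_eq_mul_exp_neg_mul (t : ℝ) (x : ℝ²) :
    heatK t x = (2 * π * t)⁻¹ * exp (-(2 * t)⁻¹ * ‖x‖ ^ 2) := by
  rw [heatK]
  congr 2
  ring

lemma integral_heatK {t : ℝ} (ht : 0 < t) : ∫ x : ℝ², heatK t x = 1 := by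
  simp_rw [heatK_eq_mul_exp_neg_mul, integral_const_mul]
  rw [GaussianFourier.integral_rexp_neg_mul_sq_norm (by positivity), finrank_euclideanSpace_fin]
  field_simp
  norm_num

lemma integrable_heatK {t : ℝ} (ht : 0 < t) : Integrable (heatK t) :=
  .of_integral_ne_zero (by rw [integral_heatK ht]; exact one_ne_zero)

lemma heatK_sub_mul_heatK_sub {s t : ℝ} (hs : 0 < s) (ht : 0 < t) (a b x : ℝ²) :
    heatK s (a - x) * heatK t (x - b) =
      heatK (s + t) (a - b) * heatK (s * t / (s + t)) (x - (s + t)⁻¹ • (t • a + s • b)) := by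
  have hexp := norm_sub_sq_div_add_norm_sub_sq_div hs ht a b x
  rw [norm_sub_rev x a] at hexp
  simp only [heatK, mul_mul_mul_comm _ (exp _), ← exp_add]
  congr 1
  · field_simp
  · have halve (A r : ℝ) : -A / (2 * r) = -(A / r) / 2 := by ring
    simp only [halve]
    congr 1
    linarith

lemma integrable_heatK_sub_mul_heatK_sub {s t : ℝ} (hs : 0 < s) (ht : 0 < t) (a b : ℝ²) :
    Integrable fun x => heatK s (a - x) * heatK t (x - b) := by
  simp_rw [heatK_sub_mul_heatK_sub hs ht]
  exact ((integrable_heatK (by positivity)).comp_sub_right _).const_mul _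

lemma integral_heatK_sub_mul_heatK_sub {s t : ℝ} (hs : 0 < s) (ht : 0 < t) (a b : ℝ²) :
    ∫ x, heatK s (a - x) * heatK t (x - b) = heatK (s + t) (a - b) := by
  simp_rw [heatK_sub_mul_heatK_sub hs ht]
  rw [integral_const_mul, integral_sub_right_eq_self, integral_heatK (by positivity), mul_one]

lemma rpow_mul_exp_neg_le {q u : ℝ} (hq : 0 ≤ q) (hu : 0 ≤ u) : u ^ q * exp (-u) ≤ q ^ q := by
  rcases hq.eq_or_lt with rfl | hq
  · simpa using hu
  have hle : u ≤ q * exp (u / q) := by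
    have := (le_add_of_nonneg_right zero_le_one).trans (add_one_le_exp (u / q))
    rwa [div_le_iff₀' hq] at this
  calc u ^ q * exp (-u) ≤ (q * exp (u / q)) ^ q * exp (-u) := by gcongr
    _ = q ^ q := by
      rw [mul_rpow hq.le (exp_nonneg _), ← exp_mul, div_mul_cancel₀ _ hq.ne', mul_assoc,
        ← exp_add, add_neg_cancel, exp_zero, mul_one]

lemma rpow_mul_exp_neg_sq_div_le {p t r : ℝ} (hp : 0 ≤ p) (ht : 0 < t) (hr : 0 ≤ r) :
    r ^ p * exp (-(r ^ 2 / (4 * t))) ≤ (2 * p * t) ^ (p / 2) := by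
  have hr_pow : r ^ p = (4 * t) ^ (p / 2) * (r ^ 2 / (4 * t)) ^ (p / 2) := by
    rw [← mul_rpow (by positivity) (by positivity), mul_div_cancel₀ _ (by positivity),
      ← rpow_natCast, ← rpow_mul hr]
    congr 1
    push_cast
    ring
  calc r ^ p * exp (-(r ^ 2 / (4 * t)))
      = (4 * t) ^ (p / 2) * ((r ^ 2 / (4 * t)) ^ (p / 2) * exp (-(r ^ 2 / (4 * t)))) := by
        rw [hr_pow, mul_assoc]
    _ ≤ (4 * t) ^ (p / 2) * (p / 2) ^ (p / 2) := by
        gcongr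
        exact rpow_mul_exp_neg_le (by positivity) (by positivity)
    _ = (2 * p * t) ^ (p / 2) := by
        rw [← mul_rpow (by positivity) (by positivity)]
        ring_nf

lemma heatK_eq_two_mul_heatK_two_mul_mul_exp (t : ℝ) (z : ℝ²) :
    heatK t z = 2 * heatK (2 * t) z * exp (-(‖z‖ ^ 2 / (4 * t))) := by
  have hsplit : -‖z‖ ^ 2 / (2 * t) = -‖z‖ ^ 2 / (2 * (2 * t)) + -(‖z‖ ^ 2 / (4 * t)) := by ring
  rw [heatK, heatK, hsplit, exp_add]
  ring

lemma heatK_mul_one_add_rpow_le {p t : ℝ} (hp : 0 ≤ p) (ht : 0 < t) (z : ℝ²) :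
    heatK t z * (1 + ‖z‖ ^ p) ≤
      2 * (1 + (2 * p) ^ (p / 2)) * (1 + t ^ (p / 2)) * heatK (2 * t) z := by
  have hweight : exp (-(‖z‖ ^ 2 / (4 * t))) * (1 + ‖z‖ ^ p) ≤
      (1 + (2 * p) ^ (p / 2)) * (1 + t ^ (p / 2)) := by
    have hexp : exp (-(‖z‖ ^ 2 / (4 * t))) ≤ 1 := exp_le_one_iff.2 (by simp; positivity)
    have hpow := rpow_mul_exp_neg_sq_div_le hp ht (norm_nonneg z)
    rw [mul_rpow (by positivity) ht.le] at hpow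
    nlinarith [rpow_nonneg (by positivity : (0 : ℝ) ≤ 2 * p) (p / 2), rpow_nonneg ht.le (p / 2)]
  rw [heatK_eq_two_mul_heatK_two_mul_mul_exp]
  have := heatK_nonneg (by positivity : (0 : ℝ) ≤ 2 * t) z
  calc 2 * heatK (2 * t) z * exp (-(‖z‖ ^ 2 / (4 * t))) * (1 + ‖z‖ ^ p)
      = 2 * heatK (2 * t) z * (exp (-(‖z‖ ^ 2 / (4 * t))) * (1 + ‖z‖ ^ p)) := by ring
    _ ≤ 2 * heatK (2 * t) z * ((1 + (2 * p) ^ (p / 2)) * (1 + t ^ (p / 2))) := by gcongr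
    _ = _ := by ring

lemma add_rpow_le_two_rpow_mul {p a b : ℝ} (hp : 0 ≤ p) (ha : 0 ≤ a) (hb : 0 ≤ b) :
    (a + b) ^ p ≤ 2 ^ p * (a ^ p + b ^ p) := by
  calc (a + b) ^ p ≤ (2 * max a b) ^ p := by gcongr; linarith [le_max_left a b, le_max_right a b]
    _ = 2 ^ p * max a b ^ p := mul_rpow zero_le_two (le_max_of_le_left ha)
    _ ≤ 2 ^ p * (a ^ p + b ^ p) := by
      gcongr
      rcases max_choice a b with h | h <;> rw [h]
      · exact le_add_of_nonneg_right (rpow_nonneg hb p)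
      · exact le_add_of_nonneg_left (rpow_nonneg ha p)

lemma one_add_norm_add_rpow_le {E : Type*} [SeminormedAddGroup E] {p : ℝ} (hp : 0 ≤ p)
    (x y : E) : 1 + ‖x + y‖ ^ p ≤ 2 ^ p * ((1 + ‖x‖ ^ p) * (1 + ‖y‖ ^ p)) := by
  have h := (rpow_le_rpow (norm_nonneg _) (norm_add_le x y) hp).trans
    (add_rpow_le_two_rpow_mul hp (norm_nonneg x) (norm_nonneg y))
  have := one_le_rpow one_le_two hp
  nlinarith [rpow_nonneg (norm_nonneg x) p, rpow_nonneg (norm_nonneg y) p,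
    mul_nonneg (rpow_nonneg (norm_nonneg x) p) (rpow_nonneg (norm_nonneg y) p)]

lemma heatK_sub_div_one_add_rpow_le {p t : ℝ} (hp : 0 ≤ p) (ht : 0 < t) (x y : ℝ²) :
    heatK t (x - y) / (1 + ‖x‖ ^ p) ≤
      2 ^ p * (2 * (1 + (2 * p) ^ (p / 2))) * (1 + t ^ (p / 2)) / (1 + ‖y‖ ^ p) *
        heatK (2 * t) (x - y) := by
  have hpeetre := one_add_norm_add_rpow_le hp x (y - x)
  rw [add_sub_cancel, norm_sub_rev] at hpeetre
  have hkernel := heatK_mul_one_add_rpow_le hp ht (x - y)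
  have := heatK_nonneg ht.le (x - y)
  rw [div_le_iff₀ (by positivity), div_mul_eq_mul_div, div_mul_eq_mul_div,
    le_div_iff₀ (by positivity)]
  calc heatK t (x - y) * (1 + ‖y‖ ^ p)
      ≤ heatK t (x - y) * (2 ^ p * ((1 + ‖x‖ ^ p) * (1 + ‖x - y‖ ^ p))) := by gcongr
    _ = 2 ^ p * (1 + ‖x‖ ^ p) * (heatK t (x - y) * (1 + ‖x - y‖ ^ p)) := by ring
    _ ≤ 2 ^ p * (1 + ‖x‖ ^ p) *
          (2 * (1 + (2 * p) ^ (p / 2)) * (1 + t ^ (p / 2)) * heatK (2 * t) (x - y)) := by gcongr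
    _ = _ := by ring

/-- For every `p ≥ 0` there is `C(p)` such that for all `T₀, T₁ ∈ (0,∞)` and `y, y' ∈ ℝ²`:
`∫ P_{T₀}(y − x') P_{T₁}(x' − y')/(1 + ‖x'‖^p) dx'
  ≤ C (1 + T₁^{p/2})/(1 + ‖y'‖^p) · P_{T₀+2T₁}(y − y')`. -/
theorem stmt_9 (p : ℝ) (hp : 0 ≤ p) :
    ∃ C : ℝ, 0 < C ∧ ∀ T₀ T₁ : ℝ, 0 < T₀ → 0 < T₁ →
      ∀ y y' : EuclideanSpace ℝ (Fin 2),
        (∫ x' : EuclideanSpace ℝ (Fin 2),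
            heatK T₀ (y - x') * heatK T₁ (x' - y') / (1 + ‖x'‖ ^ p))
          ≤ C * (1 + T₁ ^ (p/2)) / (1 + ‖y'‖ ^ p) * heatK (T₀ + 2 * T₁) (y - y') := by
  set C : ℝ := 2 ^ p * (2 * (1 + (2 * p) ^ (p / 2))) with hC
  refine ⟨C, by rw [hC]; positivity, fun T₀ T₁ hT₀ hT₁ y y' => ?_⟩
  have h2T₁ : 0 < 2 * T₁ := by positivity
  calc ∫ x', heatK T₀ (y - x') * heatK T₁ (x' - y') / (1 + ‖x'‖ ^ p)
      ≤ ∫ x', C * (1 + T₁ ^ (p / 2)) / (1 + ‖y'‖ ^ p) *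
          (heatK T₀ (y - x') * heatK (2 * T₁) (x' - y')) := by
        refine integral_mono_of_nonneg (ae_of_all _ fun x => ?_)
          ((integrable_heatK_sub_mul_heatK_sub hT₀ h2T₁ y y').const_mul _) (ae_of_all _ fun x => ?_)
        · have := heatK_nonneg hT₀.le (y - x)
          have := heatK_nonneg hT₁.le (x - y')
          positivity
        · dsimp only
          rw [mul_div_assoc]
          exact (mul_le_mul_of_nonneg_left (heatK_sub_div_one_add_rpow_le hp hT₁ x y')
            (heatK_nonneg hT₀.le (y - x))).trans_eq (by ring)
    _ = _ := by rw [integral_const_mul, integral_heatK_sub_mul_heatK_sub hT₀ h2T₁]
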